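/- Let V be a real Hilbert space with inner product a, and P₀, P₁, …, P_N orthogonal projections onto closed subspaces satisfying: (i) every v ∈ V decomposes as v = Σ_{i=0}^N vᵢ with vᵢ ∈ Vᵢ and Σᵢ a(vᵢ,vᵢ) ≤ C₀ a(v,v); (ii) for 1 ≤ i,j ≤ N, a(vᵢ,vⱼ) ≤ ℰᵢⱼ √a(vᵢ,vᵢ)√a(vⱼ,vⱼ). Then with P = Σ_{i=0}^N Pᵢ, for every e ∈ V: a(Pe, Pe) ≤ 2(‖ℰ‖₂² + 1) a(e,e). -/

import Mathlib

/-!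
Write `Pe = P₀e + Q` with `Q = Σ_{i≥1} Pᵢe`. Since `P₀` is an orthogonal projection,
`‖P₀e‖ ≤ ‖e‖`. For the local part, the strengthened Cauchy–Schwarz inequality bounds `‖Q‖²` by
the quadratic form of `ℰ` at `(‖Pᵢe‖)ᵢ`, hence by `‖ℰ‖₂ Σᵢ ‖Pᵢe‖² = ‖ℰ‖₂ ⟪e, Q⟫ ≤ ‖ℰ‖₂ ‖e‖ ‖Q‖`,
so `‖Q‖ ≤ ‖ℰ‖₂ ‖e‖`. Finally `(a + b)² ≤ 2a² + 2b²`.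
-/

open RealInnerProductSpace

/-- Spectral norm (operator 2-norm) of a real matrix. -/
noncomputable def matrixSpectralNorm {N : ℕ} (E : Matrix (Fin N) (Fin N) ℝ) : ℝ :=
  ‖(Matrix.toEuclideanCLM (𝕜 := ℝ) E : EuclideanSpace ℝ (Fin N) →L[ℝ] EuclideanSpace ℝ (Fin N))‖

open Matrix

lemma le_of_sq_le_mul {a b : ℝ} (hb : 0 ≤ b) (h : a ^ 2 ≤ b * a) : a ≤ b := by
  nlinarith

lemma dotProduct_mulVec_le_matrixSpectralNorm {N : ℕ} (E : Matrix (Fin N) (Fin N) ℝ)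
    (s : Fin N → ℝ) : s ⬝ᵥ E *ᵥ s ≤ matrixSpectralNorm E * (s ⬝ᵥ s) := by
  let x : EuclideanSpace ℝ (Fin N) := WithLp.toLp 2 s
  have hx : ‖x‖ ^ 2 = s ⬝ᵥ s := by
    rw [EuclideanSpace.real_norm_sq_eq]; simp only [x, dotProduct, sq]
  calc s ⬝ᵥ E *ᵥ s = ⟪x, toEuclideanCLM (𝕜 := ℝ) E x⟫ := (inner_toEuclideanCLM E x x).symm
    _ ≤ ‖x‖ * ‖toEuclideanCLM (𝕜 := ℝ) E x‖ := real_inner_le_norm _ _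
    _ ≤ ‖x‖ * (matrixSpectralNorm E * ‖x‖) := by
        gcongr; exact (toEuclideanCLM (𝕜 := ℝ) E).le_opNorm x
    _ = matrixSpectralNorm E * (s ⬝ᵥ s) := by rw [← hx]; ring

lemma norm_le_of_inner_self_eq_inner {V : Type*} [NormedAddCommGroup V] [InnerProductSpace ℝ V]
    {u v : V} (h : ⟪u, u⟫ = ⟪v, u⟫) : ‖u‖ ≤ ‖v‖ := by
  refine le_of_sq_le_mul (norm_nonneg v) ?_
  rw [← real_inner_self_eq_norm_sq, h]
  exact real_inner_le_norm v u

lemma norm_sum_le_matrixSpectralNorm_mul_norm {V : Type*} [NormedAddCommGroup V]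
    [InnerProductSpace ℝ V] {N : ℕ} (E : Matrix (Fin N) (Fin N) ℝ) (u : Fin N → V) (e : V)
    (hself : ∀ i, ⟪u i, u i⟫ = ⟪e, u i⟫)
    (hCS : ∀ i j, ⟪u i, u j⟫ ≤ E i j * ‖u i‖ * ‖u j‖) :
    ‖∑ i, u i‖ ≤ matrixSpectralNorm E * ‖e‖ := by
  set s : Fin N → ℝ := fun i => ‖u i‖
  refine le_of_sq_le_mul (mul_nonneg (norm_nonneg _) (norm_nonneg _)) ?_
  calc ‖∑ i, u i‖ ^ 2 = ∑ i, ∑ j, ⟪u i, u j⟫ := by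
        rw [← real_inner_self_eq_norm_sq, sum_inner]; simp only [inner_sum]
    _ ≤ ∑ i, ∑ j, E i j * s i * s j := by gcongr with i _ j _; exact hCS i j
    _ = s ⬝ᵥ E *ᵥ s := by
        simp only [dotProduct, mulVec, Finset.mul_sum]
        exact Finset.sum_congr rfl fun i _ => Finset.sum_congr rfl fun j _ => by ring
    _ ≤ matrixSpectralNorm E * (s ⬝ᵥ s) := dotProduct_mulVec_le_matrixSpectralNorm E s
    _ = matrixSpectralNorm E * ⟪e, ∑ i, u i⟫ := by
        simp only [dotProduct, inner_sum, ← hself, real_inner_self_eq_norm_sq, s, sq]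
    _ ≤ matrixSpectralNorm E * (‖e‖ * ‖∑ i, u i‖) := by
        gcongr
        · exact norm_nonneg _
        · exact real_inner_le_norm _ _
    _ = matrixSpectralNorm E * ‖e‖ * ‖∑ i, u i‖ := by ring

theorem two_level_boundedness_general {V : Type*} [NormedAddCommGroup V] [InnerProductSpace ℝ V]
    {N : ℕ} (Vs : Fin (N + 1) → Submodule ℝ V)
    (P : Fin (N + 1) → V →ₗ[ℝ] V)
    (hPmem : ∀ i (v : V), P i v ∈ Vs i)
    (hPproj : ∀ i (v : V), ∀ w ∈ Vs i, ⟪P i v, w⟫ = ⟪v, w⟫)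
    (E : Matrix (Fin N) (Fin N) ℝ)
    (hCS : ∀ (i j : Fin N), ∀ vi ∈ Vs i.succ, ∀ vj ∈ Vs j.succ,
      ⟪vi, vj⟫ ≤ E i j * Real.sqrt ⟪vi, vi⟫ * Real.sqrt ⟪vj, vj⟫) :
    ∀ e : V, ⟪∑ i, P i e, ∑ i, P i e⟫ ≤ 2 * ((matrixSpectralNorm E) ^ 2 + 1) * ⟪e, e⟫ := by
  intro e
  have hself : ∀ i, ⟪P i e, P i e⟫ = ⟪e, P i e⟫ := fun i => hPproj i e _ (hPmem i e)
  have hcoarse : ‖P 0 e‖ ≤ ‖e‖ := norm_le_of_inner_self_eq_inner (hself 0)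
  have hlocal : ‖∑ i : Fin N, P i.succ e‖ ≤ matrixSpectralNorm E * ‖e‖ :=
    norm_sum_le_matrixSpectralNorm_mul_norm E _ e (fun i => hself i.succ) fun i j => by
      simpa only [← norm_eq_sqrt_real_inner] using hCS i j _ (hPmem _ e) _ (hPmem _ e)
  rw [Fin.sum_univ_succ, real_inner_self_eq_norm_sq, real_inner_self_eq_norm_sq]
  calc ‖P 0 e + ∑ i : Fin N, P i.succ e‖ ^ 2
      ≤ (‖P 0 e‖ + ‖∑ i : Fin N, P i.succ e‖) ^ 2 := by gcongr; exact norm_add_le _ _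
    _ ≤ 2 * (‖P 0 e‖ ^ 2 + ‖∑ i : Fin N, P i.succ e‖ ^ 2) := add_sq_le
    _ ≤ 2 * (‖e‖ ^ 2 + (matrixSpectralNorm E * ‖e‖) ^ 2) := by gcongr
    _ = 2 * (matrixSpectralNorm E ^ 2 + 1) * ‖e‖ ^ 2 := by ring

/-- Two-level additive Schwarz boundedness: with a coarse projection `P 0` and local
projections `P 1, …, P N`, `a(Pe,Pe) ≤ 2(‖ℰ‖₂² + 1) a(e,e)` for `P = Σ_{i=0}^N Pᵢ`. -/
theorem two_level_boundedness {V : Type*} [NormedAddCommGroup V] [InnerProductSpace ℝ V]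
    {N : ℕ} (Vs : Fin (N + 1) → Submodule ℝ V) (hclosed : ∀ i, IsClosed (Vs i : Set V))
    (P : Fin (N + 1) → V →ₗ[ℝ] V)
    (hPmem : ∀ i (v : V), P i v ∈ Vs i)
    (hPproj : ∀ i (v : V), ∀ w ∈ Vs i, ⟪P i v, w⟫ = ⟪v, w⟫)
    (C₀ : ℝ) (hC₀ : 0 < C₀)
    (hdecomp : ∀ v : V, ∃ vi : Fin (N + 1) → V, (∀ i, vi i ∈ Vs i) ∧ v = ∑ i, vi i ∧
      ∑ i, ⟪vi i, vi i⟫ ≤ C₀ * ⟪v, v⟫)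
    (E : Matrix (Fin N) (Fin N) ℝ)
    (hE0 : ∀ i j, 0 ≤ E i j) (hE1 : ∀ i j, E i j ≤ 1)
    (hCS : ∀ (i j : Fin N), ∀ vi ∈ Vs i.succ, ∀ vj ∈ Vs j.succ,
      ⟪vi, vj⟫ ≤ E i j * Real.sqrt ⟪vi, vi⟫ * Real.sqrt ⟪vj, vj⟫) :
    ∀ e : V, ⟪∑ i, P i e, ∑ i, P i e⟫ ≤ 2 * ((matrixSpectralNorm E) ^ 2 + 1) * ⟪e, e⟫ :=
  two_level_boundedness_general Vs P hPmem hPproj E hCS
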